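/- The map V_max : ∂M → M̄, which cuts an infinite heap at its first maximal clique, is an asynchronous stopping time. -/

import Mathlib

open MeasureTheory Filter
open scoped ENNReal NNReal

namespace HeapPaper

variable {S : Type}

/-- Commutation pairs of words, generating the trace congruence. -/
def CommRel (I : S → S → Prop) (w₁ w₂ : FreeMonoid S) : Prop :=
  ∃ a b : S, I a b ∧ w₁ = FreeMonoid.of a * FreeMonoid.of b ∧
    w₂ = FreeMonoid.of b * FreeMonoid.of a

/-- The congruence on the free monoid generated by the commutation of independent pieces. -/
def HeapCon (I : S → S → Prop) : Con (FreeMonoid S) := conGen (CommRel I)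

/-- The heap monoid `M(Σ, I)`:  the presented monoid `⟨Σ | ab = ba, (a,b) ∈ I⟩`. -/
def Heap (I : S → S → Prop) := (HeapCon I).Quotient

instance (I : S → S → Prop) : Monoid (Heap I) :=
  inferInstanceAs (Monoid (HeapCon I).Quotient)

/-- The unique additive extension to heaps of a function `φ` defined on pieces. -/
def addExt {A : Type} [AddCommMonoid A] {I : S → S → Prop} (φ : S → A) : Heap I → A :=
  fun x => Multiplicative.toAdd <|
    (Con.lift (HeapCon I) (FreeMonoid.lift fun a => Multiplicative.ofAdd (φ a))
      (Con.conGen_le.mpr (by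
        rintro w₁ w₂ ⟨a, b, hab, rfl, rfl⟩
        exact (Con.ker_rel _).mpr (by simp [map_mul, mul_comm])))) x

/-- The length `|x|` of a heap: the common length of its representative words. -/
def len {I : S → S → Prop} (x : Heap I) : ℕ := addExt (fun _ => 1) x

/-- The number `|x|ₐ` of occurrences of the piece `a` in the heap `x`. -/
def occ {I : S → S → Prop} [DecidableEq S] (a : S) (x : Heap I) : ℕ :=
  addExt (fun b => if b = a then 1 else 0) x

/-- The additive extension `⟨φ, x⟩` of a real-valued cost function. -/
def pairing {I : S → S → Prop} (φ : S → ℝ) (x : Heap I) : ℝ := addExt φ x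

/-- The left-divisibility order on the heap monoid. -/
def hLe {I : S → S → Prop} (x y : Heap I) : Prop := ∃ z : Heap I, y = x * z

/-- Cliques: finite sets of pairwise independent pieces. -/
def Cl (I : S → S → Prop) := {s : Finset S // ∀ a ∈ s, ∀ b ∈ s, a ≠ b → I a b}

/-- The empty clique. -/
def emptyCl (I : S → S → Prop) : Cl I := ⟨∅, by simp⟩

/-- The heap associated with a clique (product of its pieces, in any order). -/
def Cl.heap {I : S → S → Prop} (γ : Cl I) : Heap I :=
  γ.1.noncommProd (fun a => (HeapCon I).mk' (FreeMonoid.of a)) (by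
    intro a ha b hb hab
    have hI : I a b := γ.2 a ha b hb hab
    show (HeapCon I).mk' (FreeMonoid.of a) * (HeapCon I).mk' (FreeMonoid.of b)
        = (HeapCon I).mk' (FreeMonoid.of b) * (HeapCon I).mk' (FreeMonoid.of a)
    rw [← map_mul, ← map_mul]
    exact (Con.eq _).mpr (ConGen.Rel.of _ _ ⟨a, b, hI, rfl, rfl⟩))

/-- The Cartier–Foata move relation `γ → γ'` between cliques. -/
def Move {I : S → S → Prop} (γ γ' : Cl I) : Prop :=
  ∀ b ∈ γ'.1, ∃ a ∈ γ.1, ¬ I a b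

/-- The boundary `∂M`: infinite admissible sequences of nonempty cliques. -/
def Bnd (I : S → S → Prop) :=
  {ξ : ℕ → Cl I // (∀ n, (ξ n).1.Nonempty) ∧ ∀ n, Move (ξ n) (ξ (n + 1))}

/-- `M̄ = M ∪ ∂M`. -/
def MB (I : S → S → Prop) := Heap I ⊕ Bnd I

/-- Partial products of a sequence of cliques. -/
def ppSeq {I : S → S → Prop} (c : ℕ → Cl I) (n : ℕ) : Heap I :=
  ((List.range n).map fun i => (c i).heap).prod

/-- `c` is the Cartier–Foata decomposition of the heap `x`, padded with empty cliques:
`c` is admissible, eventually empty, with partial products eventually equal to `x`. -/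
def CFprop (I : S → S → Prop) (c : ℕ → Cl I) (x : Heap I) : Prop :=
  (∀ n, Move (c n) (c (n + 1))) ∧
    ∃ N, ∀ n, N ≤ n → ppSeq c n = x ∧ c n = emptyCl I

/-- The (padded) Cartier–Foata decomposition of a heap. -/
noncomputable def cf (I : S → S → Prop) (x : Heap I) : ℕ → Cl I :=
  letI := Classical.propDecidable (∃ c, CFprop I c x)
  if h : ∃ c, CFprop I c x then h.choose else fun _ => emptyCl I

/-- The Cartier–Foata sequence of an element of `M̄`. -/
noncomputable def seqOf {I : S → S → Prop} : MB I → ℕ → Cl I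
  | .inl x => cf I x
  | .inr ξ => ξ.1

/-- Partial products of the Cartier–Foata sequence of an element of `M̄`. -/
noncomputable def pp {I : S → S → Prop} (ζ : MB I) (n : ℕ) : Heap I :=
  ppSeq (seqOf ζ) n

/-- The order on `M̄`: `ξ ≤ ξ'` iff `γ₁⋯γₙ ≤ γ'₁⋯γ'ₙ` in `M` for all `n`. -/
noncomputable def mLe {I : S → S → Prop} (ζ ζ' : MB I) : Prop :=
  ∀ n : ℕ, hLe (pp ζ n) (pp ζ' n)

/-- The elementary cylinder `↑x ⊆ ∂M` of base `x ∈ M`. -/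
noncomputable def cyl {I : S → S → Prop} (x : Heap I) : Set (Bnd I) :=
  {ξ : Bnd I | mLe (.inl x) (.inr ξ)}

/-- The σ-algebra `𝔉` on `∂M` generated by the elementary cylinders. -/
noncomputable def Fsa (I : S → S → Prop) : MeasurableSpace (Bnd I) :=
  MeasurableSpace.generateFrom {A : Set (Bnd I) | ∃ x : Heap I, A = cyl x}

noncomputable instance (I : S → S → Prop) : MeasurableSpace (Bnd I) := Fsa I

/-- `ζ` is the least upper bound in `M̄` of the nondecreasing sequence `(x·γ₁⋯γₙ)ₙ`,
where `(γₙ)` is the Cartier–Foata sequence of `ξ`; this characterizes `x·ξ`. -/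
noncomputable def IsConc {I : S → S → Prop} (x : Heap I) (ξ : Bnd I) (ζ : MB I) : Prop :=
  (∀ n : ℕ, mLe (.inl (x * pp (.inr ξ) n)) ζ) ∧
    ∀ η : MB I, (∀ n : ℕ, mLe (.inl (x * pp (.inr ξ) n)) η) → mLe ζ η

/-- The concatenation `x·ξ ∈ ∂M` of a heap `x` and an infinite heap `ξ`. -/
noncomputable def concB {I : S → S → Prop} (x : Heap I) (ξ : Bnd I) : Bnd I :=
  letI := Classical.propDecidable (∃ ζ : Bnd I, IsConc x ξ (.inr ζ))
  if h : ∃ ζ : Bnd I, IsConc x ξ (.inr ζ) then h.choose else ξ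

/-- The difference `ξ − x`: the unique `ζ ∈ ∂M` with `x·ζ = ξ` (junk value if none exists). -/
noncomputable def subB {I : S → S → Prop} (ξ : Bnd I) (x : Heap I) : Bnd I :=
  letI := Classical.propDecidable (∃ ζ : Bnd I, concB x ζ = ξ)
  if h : ∃ ζ : Bnd I, concB x ζ = ξ then h.choose else ξ

/-- Asynchronous stopping time. -/
noncomputable def IsAST {I : S → S → Prop} (V : Bnd I → MB I) : Prop :=
  (∀ ξ : Bnd I, mLe (V ξ) (.inr ξ)) ∧
    ∀ (ξ ξ' : Bnd I) (x : Heap I), V ξ = .inl x → mLe (.inl x) (.inr ξ') → V ξ' = V ξ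

/-- The shift operator `θ_V` associated with an AST `V` (junk: identity outside its domain). -/
noncomputable def shiftV {I : S → S → Prop} (V : Bnd I → MB I) (ξ : Bnd I) : Bnd I :=
  match V ξ with
  | .inl x => subB ξ x
  | .inr _ => ξ

/-- The σ-algebra `𝔉_V` generated by the cylinders of the finite values of `V`. -/
noncomputable def astSA {I : S → S → Prop} (V : Bnd I → MB I) : MeasurableSpace (Bnd I) :=
  MeasurableSpace.generateFrom
    {A : Set (Bnd I) | ∃ x : Heap I, (∃ ξ : Bnd I, V ξ = .inl x) ∧ A = cyl x}

/-- The iterated sequence `(Vₙ)ₙ` of an AST `V`:  `V₀ = 0` and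
`V_{n+1}(ξ) = Vₙ(ξ)·V(ξ − Vₙ(ξ))` if `Vₙ(ξ) ∈ M`, `V_{n+1}(ξ) = ξ` otherwise. -/
noncomputable def iter {I : S → S → Prop} (V : Bnd I → MB I) : ℕ → Bnd I → MB I
  | 0, _ => .inl 1
  | n + 1, ξ =>
    match iter V n ξ with
    | .inl x =>
      match V (subB ξ x) with
      | .inl y => .inl (x * y)
      | .inr ζ => .inr (concB x ζ)
    | .inr _ => .inr ξ

/-- The increment `Δ_{n+1} = V ∘ θ_{Vₙ}` (junk value outside the domain of `θ_{Vₙ}`). -/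
noncomputable def Delta {I : S → S → Prop} (V : Bnd I → MB I) (n : ℕ) (ξ : Bnd I) : MB I :=
  match iter V n ξ with
  | .inl x => V (subB ξ x)
  | .inr _ => .inr ξ

/-- The length of an element of `M̄`, with `|ξ| = ∞` for `ξ ∈ ∂M`. -/
noncomputable def lenE {I : S → S → Prop} : MB I → ℝ≥0∞
  | .inl x => (len x : ℝ≥0∞)
  | .inr _ => ⊤

/-- `E|V| < ∞`. -/
noncomputable def EVfin {I : S → S → Prop} (P : Measure (Bnd I)) (V : Bnd I → MB I) : Prop :=
  ∫⁻ ξ, lenE (V ξ) ∂P < ⊤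

/-- The AST `V` is exhaustive: it is `ℙ`-a.s. finite and `ℙ`-a.s. `ξ = ⋁ₙ Vₙ(ξ)`
(`ξ` is the least upper bound of its iterates). -/
noncomputable def Exhaustive {I : S → S → Prop} (P : Measure (Bnd I)) (V : Bnd I → MB I) : Prop :=
  (∀ᵐ ξ ∂P, ∃ x : Heap I, V ξ = .inl x) ∧
    ∀ᵐ ξ ∂P, (∀ n : ℕ, mLe (iter V n ξ) (.inr ξ)) ∧
      ∀ ζ : MB I, (∀ n : ℕ, mLe (iter V n ξ) ζ) → mLe (.inr ξ) ζ

/-- `ℙ` is a Bernoulli measure: a probability measure on `(∂M, 𝔉)` that is multiplicative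
and positive on elementary cylinders. -/
noncomputable def IsBernoulli {I : S → S → Prop} (P : Measure (Bnd I)) : Prop :=
  IsProbabilityMeasure P ∧
    (∀ x y : Heap I, P (cyl (x * y)) = P (cyl x) * P (cyl y)) ∧
    ∀ x : Heap I, 0 < P (cyl x)

/-- `ζ` is the greatest lower bound, within the complete lattice `L(ξ)`, of the set
`Hₐ(ξ)` of finite subheaps of `ξ` containing an occurrence of `a`:  this characterizes
the first hitting time of `a`. -/
noncomputable def IsHit {I : S → S → Prop} [DecidableEq S] (a : S) (ξ : Bnd I) (ζ : MB I) :
    Prop :=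
  mLe ζ (.inr ξ) ∧
    (∀ x : Heap I, mLe (.inl x) (.inr ξ) → 0 < occ a x → mLe ζ (.inl x)) ∧
    ∀ η : MB I, mLe η (.inr ξ) →
      (∀ x : Heap I, mLe (.inl x) (.inr ξ) → 0 < occ a x → mLe η (.inl x)) → mLe η ζ

/-- The first hitting time of the piece `a`. -/
noncomputable def hit {I : S → S → Prop} [DecidableEq S] (a : S) (ξ : Bnd I) : MB I :=
  letI := Classical.propDecidable (∃ ζ : MB I, IsHit a ξ ζ)
  if h : ∃ ζ : MB I, IsHit a ξ ζ then h.choose else .inr ξ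

/-- A maximal clique: a maximal element of `(𝒞, ≤)`. -/
noncomputable def IsMaxCl {I : S → S → Prop} (γ : Cl I) : Prop :=
  ∀ δ : Cl I, hLe γ.heap δ.heap → δ.heap = γ.heap

/-- The AST cutting an infinite heap at the first occurrence of a maximal clique. -/
noncomputable def Vmax {I : S → S → Prop} (ξ : Bnd I) : MB I :=
  letI := Classical.propDecidable
  if h : ∃ k : ℕ, IsMaxCl (ξ.1 k) then .inl (ppSeq ξ.1 (Nat.find h + 1)) else .inr ξ

/-- The ergodic mean `⟨φ, x⟩ / |x|` (junk value `0` on infinite heaps). -/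
noncomputable def ratioC {I : S → S → Prop} (φ : S → ℝ) : MB I → ℝ
  | .inl x => pairing φ x / (len x : ℝ)
  | .inr _ => 0

/-- The ratio `φ(x)/|x|` for `φ` defined on heaps (junk value `0` on infinite heaps). -/
noncomputable def ratioH {I : S → S → Prop} (φ : Heap I → ℝ) : MB I → ℝ
  | .inl x => φ x / (len x : ℝ)
  | .inr _ => 0

/-- The set `ℭ` of nonempty cliques. -/
def NCl (I : S → S → Prop) := {γ : Cl I // γ.1.Nonempty}

instance [Fintype S] (I : S → S → Prop) : Finite (Cl I) :=
  inferInstanceAs (Finite {s : Finset S // ∀ a ∈ s, ∀ b ∈ s, a ≠ b → I a b})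

instance [Fintype S] (I : S → S → Prop) : Finite (NCl I) :=
  inferInstanceAs (Finite {γ : Cl I // γ.1.Nonempty})

/-- The valuation `f(x) = ℙ(↑x)` associated with `ℙ`. -/
noncomputable def fval {I : S → S → Prop} (P : Measure (Bnd I)) (x : Heap I) : ℝ :=
  (P (cyl x)).toReal

open Classical in
/-- The Möbius transform `h` of the valuation `f` associated with `ℙ`. -/
noncomputable def mobius {I : S → S → Prop} (P : Measure (Bnd I)) (γ : Cl I) : ℝ :=
  ∑ᶠ γ' : Cl I,
    if hLe γ.heap γ'.heap then (-1 : ℝ) ^ (γ'.1.card - γ.1.card) * fval P γ'.heap else 0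

open Classical in
/-- The normalization `g(γ) = Σ_{γ'∈ℭ, γ→γ'} h(γ')`. -/
noncomputable def gnorm {I : S → S → Prop} (P : Measure (Bnd I)) (γ : Cl I) : ℝ :=
  ∑ᶠ γ' : Cl I, if γ'.1.Nonempty ∧ Move γ γ' then mobius P γ' else 0

open Classical in
/-- The transition matrix of the Markov chain of cliques. -/
noncomputable def Pmat {I : S → S → Prop} (P : Measure (Bnd I)) (γ γ' : Cl I) : ℝ :=
  if Move γ γ' then mobius P γ' / gnorm P γ else 0

/-- `π` is a stationary probability distribution, carried by the nonempty cliques, of the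
Markov chain of cliques. -/
noncomputable def IsStationary {I : S → S → Prop} (P : Measure (Bnd I)) (π : Cl I → ℝ) :
    Prop :=
  (∀ γ : Cl I, 0 ≤ π γ) ∧ (π (emptyCl I) = 0) ∧ (∑ᶠ γ : Cl I, π γ = 1) ∧
    ∀ γ' : Cl I, π γ' = ∑ᶠ γ : Cl I, π γ * Pmat P γ γ'

open Classical in
/-- The nonnegative matrix `B` on `ℭ×ℭ`: `B_{γ,γ'} = f(γ')` if `γ → γ'`, else `0`. -/
noncomputable def Bmat {I : S → S → Prop} (P : Measure (Bnd I)) :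
    Matrix (NCl I) (NCl I) ℝ :=
  fun γ γ' => if Move γ.1 γ'.1 then fval P γ'.1.heap else 0

/-- The spectral radius of `B` (as a complex matrix). -/
noncomputable def specRadB [Fintype S] {I : S → S → Prop} (P : Measure (Bnd I)) : ℝ≥0∞ :=
  letI : Fintype (NCl I) := Fintype.ofFinite _
  letI : DecidableEq (NCl I) := Classical.decEq _
  spectralRadius ℂ ((Bmat P).map (algebraMap ℝ ℂ))

/-- The height `τ(x)` of a heap: the number of cliques in its Cartier–Foata decomposition. -/
noncomputable def height {I : S → S → Prop} (x : Heap I) : ℕ :=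
  sInf {N : ℕ | ∀ n, N ≤ n → cf I x n = emptyCl I}

/-- The ratio `|x|/τ(x)` (junk value `0` on infinite heaps). -/
noncomputable def speedRatio {I : S → S → Prop} : MB I → ℝ
  | .inl x => (len x : ℝ) / (height x : ℝ)
  | .inr _ => 0

/-- `ψ ∘ θ_V` extended by `0` outside the domain of `θ_V`. -/
noncomputable def extShift {I : S → S → Prop} (V : Bnd I → MB I) (ψ : Bnd I → ℝ)
    (η : Bnd I) : ℝ :=
  match V η with
  | .inl _ => ψ (shiftV V η)
  | .inr _ => 0

/-!
Let `γₖ` be the first maximal clique of `ξ`, so that `V_max(ξ) = γ₁⋯γₖ`, a heap whose Cartier–Foata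
decomposition is `(γ₁, …, γₖ)`; hence `γ₁⋯γₖ ≤ ξ'` says `γ₁⋯γᵢ ≤ γ'₁⋯γ'ᵢ` for all `i ≤ k`.
Once `γ'ⱼ = γⱼ` for `j < i`, cancellation gives `γᵢ ≤ γ'ᵢ`, and a piece `b ∈ γ'ᵢ ∖ γᵢ` divides
`γᵢ⋯γₖ · z`. The Cartier–Foata condition puts every piece that can start `γᵢ⋯γₖ` into `γᵢ`, so `b`
commutes with every piece of `γᵢ⋯γₖ`, in particular with all of `γₖ`; maximality then forces
`b ∈ γₖ`, and `b` would commute with itself. So `ξ'` begins with `γ₁, …, γₖ`, its first maximal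
clique is again `γₖ`, and `V_max(ξ') = V_max(ξ)`.
-/

section HeapMonoid

variable {I : S → S → Prop}

def mkHeap (I : S → S → Prop) : FreeMonoid S →* Heap I := (HeapCon I).mk'

lemma mkHeap_surjective : Function.Surjective (mkHeap I) := (HeapCon I).mk'_surjective

lemma mkHeap_eq_mkHeap_iff {w u : FreeMonoid S} : mkHeap I w = mkHeap I u ↔ HeapCon I w u :=
  Con.eq _

def piece (I : S → S → Prop) (a : S) : Heap I := mkHeap I (.of a)

lemma mkHeap_of_mul_of_comm {a b : S} (h : I a b) :
    mkHeap I (.of a * .of b) = mkHeap I (.of b * .of a) :=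
  mkHeap_eq_mkHeap_iff.mpr (ConGen.Rel.of _ _ ⟨a, b, h, rfl, rfl⟩)

lemma piece_mul_comm {a b : S} (h : I a b) : piece I a * piece I b = piece I b * piece I a := by
  simpa only [piece, map_mul] using mkHeap_of_mul_of_comm h

lemma hLe_iff_dvd {x y : Heap I} : hLe x y ↔ x ∣ y := Iff.rfl

lemma addExt_one {A : Type} [AddCommMonoid A] (φ : S → A) : addExt φ (1 : Heap I) = 0 := by
  unfold addExt
  exact congrArg Multiplicative.toAdd (map_one _)

lemma addExt_mul {A : Type} [AddCommMonoid A] (φ : S → A) (x y : Heap I) :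
    addExt φ (x * y) = addExt φ x + addExt φ y := by
  unfold addExt
  exact congrArg Multiplicative.toAdd (map_mul _ x y)

lemma addExt_piece {A : Type} [AddCommMonoid A] (φ : S → A) (a : S) :
    addExt φ (piece I a) = φ a := by
  unfold addExt piece mkHeap
  exact congrArg Multiplicative.toAdd ((Con.lift_mk' _ _).trans (FreeMonoid.lift_eval_of _ _))

def addExtHom {A : Type} [AddCommMonoid A] (φ : S → A) : Heap I →* Multiplicative A where
  toFun x := .ofAdd (addExt φ x)
  map_one' := by rw [addExt_one]; rfl
  map_mul' x y := by rw [addExt_mul]; rfl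

lemma addExt_heap {A : Type} [AddCommMonoid A] (φ : S → A) (γ : Cl I) :
    addExt φ γ.heap = ∑ a ∈ γ.1, φ a := by
  change Multiplicative.toAdd (addExtHom φ γ.heap) = _
  unfold Cl.heap
  erw [Finset.map_noncommProd (g := addExtHom φ), Finset.noncommProd_eq_prod]
  exact (toAdd_prod _ _).trans (Finset.sum_congr rfl fun a _ => addExt_piece φ a)

section Occ

variable [DecidableEq S]

lemma occ_one (a : S) : occ a (1 : Heap I) = 0 := addExt_one _

lemma occ_mul (a : S) (x y : Heap I) : occ a (x * y) = occ a x + occ a y :=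
  addExt_mul _ x y

lemma occ_piece (a b : S) : occ a (piece I b) = if b = a then 1 else 0 := addExt_piece _ b

lemma occ_mkHeap (a : S) (w : FreeMonoid S) : occ a (mkHeap I w) = w.toList.count a := by
  induction w using FreeMonoid.inductionOn' with
  | one => simpa using occ_one a
  | of_mul b w ih =>
    rw [map_mul, occ_mul, ← piece, occ_piece, ih, FreeMonoid.toList_of_mul, List.count_cons]
    simp [add_comm]

lemma mem_toList_iff_of_mkHeap_eq {w u : FreeMonoid S} (h : mkHeap I w = mkHeap I u) (a : S) :
    a ∈ w.toList ↔ a ∈ u.toList := by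
  rw [← List.count_pos_iff, ← List.count_pos_iff, ← occ_mkHeap (I := I), h, occ_mkHeap]

lemma occ_le_of_dvd (a : S) {x y : Heap I} (h : x ∣ y) : occ a x ≤ occ a y := by
  obtain ⟨z, rfl⟩ := h
  rw [occ_mul]
  exact Nat.le_add_right _ _

lemma occ_heap (a : S) (γ : Cl I) : occ a γ.heap = if a ∈ γ.1 then 1 else 0 := by
  rw [occ, addExt_heap, Finset.sum_ite_eq']

end Occ

end HeapMonoid

section Cancel

variable {I : S → S → Prop} [DecidableEq S]

def eraseHeap (I : S → S → Prop) (a : S) (w : FreeMonoid S) : Heap I :=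
  mkHeap I (.ofList (w.toList.erase a))

lemma eraseHeap_eq_of_heapCon (a : S) {w u : FreeMonoid S} (h : HeapCon I w u) :
    eraseHeap I a w = eraseHeap I a u := by
  induction h with
  | of w u h =>
    obtain ⟨c, d, hcd, rfl, rfl⟩ := h
    simp only [eraseHeap, FreeMonoid.toList_mul, FreeMonoid.toList_of, List.singleton_append,
      List.erase_cons, List.erase_nil]
    split_ifs <;> simp_all [FreeMonoid.ofList_cons, mkHeap_of_mul_of_comm hcd]
  | refl => rfl
  | symm _ ih => exact ih.symm
  | trans _ _ ih₁ ih₂ => exact ih₁.trans ih₂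
  | mul h₁ h₂ ih₁ ih₂ =>
    rename_i p p' q q'
    have hp : mkHeap I p = mkHeap I p' := mkHeap_eq_mkHeap_iff.mpr h₁
    have hq : mkHeap I q = mkHeap I q' := mkHeap_eq_mkHeap_iff.mpr h₂
    simp only [eraseHeap, FreeMonoid.toList_mul, List.erase_append,
      mem_toList_iff_of_mkHeap_eq hp a] at ih₁ ih₂ ⊢
    split_ifs
    · simp only [FreeMonoid.ofList_append, map_mul, FreeMonoid.ofList_toList, hq, ih₁]
    · simp only [FreeMonoid.ofList_append, map_mul, FreeMonoid.ofList_toList, hp, ih₂]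

lemma piece_mul_left_cancel {a : S} {x y : Heap I} (h : piece I a * x = piece I a * y) : x = y := by
  obtain ⟨p, rfl⟩ := mkHeap_surjective x
  obtain ⟨q, rfl⟩ := mkHeap_surjective y
  rw [piece, ← map_mul, ← map_mul, mkHeap_eq_mkHeap_iff] at h
  simpa [eraseHeap] using eraseHeap_eq_of_heapCon a h

end Cancel

instance {I : S → S → Prop} : IsLeftCancelMul (Heap I) where
  mul_left_cancel x := by
    classical
    obtain ⟨w, rfl⟩ := mkHeap_surjective x
    induction w using FreeMonoid.inductionOn' with
    | one => rw [map_one]; exact isRegular_one.left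
    | of_mul a w ih =>
      intro y z h
      simp only [map_mul, mul_assoc] at h
      exact ih (piece_mul_left_cancel h)

section FirstLetter

variable {I : S → S → Prop}

/-- Some occurrence of `b` in `l` is preceded only by pieces independent of `b`. -/
def IsFirstLetter (I : S → S → Prop) (b : S) : List S → Prop
  | [] => False
  | c :: l => c = b ∨ I c b ∧ IsFirstLetter I b l

lemma isFirstLetter_append {b : S} {p q : List S} :
    IsFirstLetter I b (p ++ q) ↔ IsFirstLetter I b p ∨ (∀ c ∈ p, I c b) ∧ IsFirstLetter I b q := by
  induction p with
  | nil => simp [IsFirstLetter]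
  | cons c p ih =>
    simp only [List.cons_append, IsFirstLetter, ih, List.forall_mem_cons]
    tauto

lemma isFirstLetter_iff_of_heapCon [DecidableEq S] (hsymm : ∀ a b : S, I a b → I b a) {b : S}
    {w u : FreeMonoid S} (h : HeapCon I w u) :
    IsFirstLetter I b w.toList ↔ IsFirstLetter I b u.toList := by
  induction h with
  | of w u h =>
    obtain ⟨c, d, hcd, rfl, rfl⟩ := h
    simp only [FreeMonoid.toList_mul, FreeMonoid.toList_of, List.singleton_append, IsFirstLetter,
      and_false, or_false]
    constructor <;> rintro (rfl | ⟨h, rfl⟩) <;> simp_all [hsymm _ _ hcd]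
  | refl => rfl
  | symm _ ih => exact ih.symm
  | trans _ _ ih₁ ih₂ => exact ih₁.trans ih₂
  | mul h₁ _ ih₁ ih₂ =>
    have hp := mem_toList_iff_of_mkHeap_eq (mkHeap_eq_mkHeap_iff.mpr h₁)
    simp only [FreeMonoid.toList_mul, isFirstLetter_append, ih₁, ih₂, hp]

lemma piece_dvd_mkHeap_of_isFirstLetter {b : S} {l : List S} (h : IsFirstLetter I b l) :
    piece I b ∣ mkHeap I (.ofList l) := by
  induction l with
  | nil => exact h.elim
  | cons c l ih =>
    rw [FreeMonoid.ofList_cons, map_mul, ← piece]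
    rcases h with rfl | ⟨hcb, h⟩
    · exact dvd_mul_right _ _
    · obtain ⟨z, hz⟩ := ih h
      exact ⟨piece I c * z, by rw [hz, ← mul_assoc, piece_mul_comm hcb, mul_assoc]⟩

lemma isFirstLetter_of_piece_dvd_mkHeap [DecidableEq S] (hsymm : ∀ a b : S, I a b → I b a)
    {b : S} {w : FreeMonoid S} (h : piece I b ∣ mkHeap I w) : IsFirstLetter I b w.toList := by
  obtain ⟨z, hz⟩ := h
  obtain ⟨q, rfl⟩ := mkHeap_surjective z
  rw [piece, ← map_mul, mkHeap_eq_mkHeap_iff] at hz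
  exact (isFirstLetter_iff_of_heapCon hsymm hz).mpr (Or.inl rfl)

lemma piece_dvd_mul [DecidableEq S] (hsymm : ∀ a b : S, I a b → I b a) {b : S} {x y : Heap I}
    (h : piece I b ∣ x * y) :
    piece I b ∣ x ∨ (∀ c, 0 < occ c x → I c b) ∧ piece I b ∣ y := by
  obtain ⟨p, rfl⟩ := mkHeap_surjective x
  obtain ⟨q, rfl⟩ := mkHeap_surjective y
  rw [← map_mul] at h
  refine (isFirstLetter_append.mp (isFirstLetter_of_piece_dvd_mkHeap hsymm h)).imp
    piece_dvd_mkHeap_of_isFirstLetter fun ⟨hp, hq⟩ => ⟨fun c hc => hp c ?_,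
      piece_dvd_mkHeap_of_isFirstLetter hq⟩
  rwa [occ_mkHeap, List.count_pos_iff] at hc

end FirstLetter

section Cliques

variable {I : S → S → Prop}

lemma piece_dvd_heap {γ : Cl I} {b : S} (hb : b ∈ γ.1) : piece I b ∣ γ.heap := by
  classical
  exact ⟨_, (Finset.mul_noncommProd_erase γ.1 hb _ _).symm⟩

section Occ

variable [DecidableEq S]

lemma mem_iff_occ_heap_pos {γ : Cl I} {a : S} : a ∈ γ.1 ↔ 0 < occ a γ.heap := by
  rw [occ_heap]
  split_ifs with h <;> simp [h]

lemma mem_of_piece_dvd_heap {γ : Cl I} {b : S} (h : piece I b ∣ γ.heap) : b ∈ γ.1 :=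
  mem_iff_occ_heap_pos.mpr (lt_of_lt_of_le (by simp [occ_piece]) (occ_le_of_dvd b h))

lemma subset_of_heap_dvd_heap {γ δ : Cl I} (h : γ.heap ∣ δ.heap) : γ.1 ⊆ δ.1 := fun a ha =>
  mem_iff_occ_heap_pos.mpr ((mem_iff_occ_heap_pos.mp ha).trans_le (occ_le_of_dvd a h))

/-- Otherwise `insert b γ` would be a clique strictly above `γ`. -/
lemma IsMaxCl.mem_of_forall_indep (hsymm : ∀ a b : S, I a b → I b a)
    {γ : Cl I} (hγ : IsMaxCl γ) {b : S} (hb : ∀ a ∈ γ.1, I a b) : b ∈ γ.1 := by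
  by_contra hbγ
  let δ : Cl I := ⟨insert b γ.1, by
    simp only [Finset.mem_insert]
    rintro a (rfl | ha) c (rfl | hc) hac
    exacts [absurd rfl hac, hsymm _ _ (hb c hc), hb a ha, γ.2 a ha c hc hac]⟩
  have hδ : δ.heap = piece I b * γ.heap := Finset.noncommProd_insert_of_notMem _ _ _ _ hbγ
  have hcomm : piece I b * γ.heap = γ.heap * piece I b :=
    (Finset.noncommProd_commute _ _ _ _ fun a ha => piece_mul_comm (hsymm _ _ (hb a ha))).eq
  have := congrArg (occ b) (hγ δ ⟨piece I b, by rw [hδ, hcomm]⟩)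
  rw [occ_heap, occ_heap, if_pos (Finset.mem_insert_self _ _), if_neg hbγ] at this
  exact one_ne_zero this

end Occ

end Cliques

section PartialProducts

variable {I : S → S → Prop}

@[simp]
lemma ppSeq_zero (c : ℕ → Cl I) : ppSeq c 0 = 1 := rfl

lemma ppSeq_succ (c : ℕ → Cl I) (n : ℕ) : ppSeq c (n + 1) = ppSeq c n * (c n).heap := by
  simp [ppSeq, List.range_succ]

lemma ppSeq_succ' (c : ℕ → Cl I) (n : ℕ) :
    ppSeq c (n + 1) = (c 0).heap * ppSeq (fun j => c (j + 1)) n := by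
  simp [ppSeq, List.range_succ_eq_map, Function.comp_def]

lemma ppSeq_congr {c d : ℕ → Cl I} {n : ℕ} (h : ∀ j < n, c j = d j) : ppSeq c n = ppSeq d n := by
  unfold ppSeq
  congr 1
  exact List.map_congr_left fun j hj => by rw [h j (List.mem_range.mp hj)]

lemma ppSeq_dvd_ppSeq (c : ℕ → Cl I) {m n : ℕ} (h : m ≤ n) : ppSeq c m ∣ ppSeq c n := by
  induction n, h using Nat.le_induction with
  | base => rfl
  | succ n _ ih => exact ih.trans ⟨_, ppSeq_succ c n⟩

lemma move_emptyCl (γ : Cl I) : Move γ (emptyCl I) := fun b hb => absurd hb (Finset.notMem_empty b)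

def truncate (c : ℕ → Cl I) (m : ℕ) : ℕ → Cl I := fun j => if j < m then c j else emptyCl I

lemma ppSeq_truncate (c : ℕ → Cl I) (m n : ℕ) :
    ppSeq (truncate c m) n = ppSeq c (min n m) := by
  induction n with
  | zero => simp
  | succ n ih =>
    rw [ppSeq_succ, ih, truncate]
    split_ifs with h
    · rw [Nat.min_eq_left h.le, Nat.min_eq_left h, ppSeq_succ]
    · rw [Nat.min_eq_right (not_lt.mp h), Nat.min_eq_right (by omega)]
      exact mul_one _

lemma cfProp_truncate {c : ℕ → Cl I} (hc : ∀ n, Move (c n) (c (n + 1))) (m : ℕ) :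
    CFprop I (truncate c m) (ppSeq c m) := by
  refine ⟨fun n => ?_, m, fun n hn => ⟨?_, if_neg (by omega)⟩⟩
  · unfold truncate
    split_ifs with h₁ h₂ h₂
    · exact hc n
    · exact move_emptyCl _
    · omega
    · exact move_emptyCl _
  · rw [ppSeq_truncate, Nat.min_eq_right hn]

lemma pp_inl_ppSeq (hCF : ∀ x : Heap I, ∃! c : ℕ → Cl I, CFprop I c x) {c : ℕ → Cl I}
    (hc : ∀ n, Move (c n) (c (n + 1))) (m n : ℕ) :
    pp (.inl (ppSeq c m)) n = ppSeq c (min n m) := by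
  have hex : ∃ d, CFprop I d (ppSeq c m) := ⟨_, cfProp_truncate hc m⟩
  have hcf : cf I (ppSeq c m) = truncate c m := by
    rw [cf, dif_pos hex]
    exact (hCF _).unique hex.choose_spec (cfProp_truncate hc m)
  change ppSeq (cf I (ppSeq c m)) n = _
  rw [hcf, ppSeq_truncate]

end PartialProducts

section Admissible

variable {I : S → S → Prop} [DecidableEq S] (hsymm : ∀ a b : S, I a b → I b a)
include hsymm

lemma mem_head_of_piece_dvd_ppSeq {c : ℕ → Cl I} (hc : ∀ n, Move (c n) (c (n + 1))) {b : S}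
    {n : ℕ} (h : piece I b ∣ ppSeq c n) : b ∈ (c 0).1 := by
  induction n generalizing c with
  | zero =>
    have := occ_le_of_dvd b h
    rw [occ_piece, if_pos rfl, ppSeq_zero, occ_one] at this
    omega
  | succ n ih =>
    rw [ppSeq_succ'] at h
    rcases piece_dvd_mul hsymm h with h₀ | ⟨hindep, hrest⟩
    · exact mem_of_piece_dvd_heap h₀
    · obtain ⟨a, ha, hab⟩ := hc 0 b (ih (fun n => hc (n + 1)) hrest)
      exact absurd (hindep a (mem_iff_occ_heap_pos.mp ha)) hab

lemma head_eq_of_dvd_ppSeq (hirr : ∀ a : S, ¬ I a a) {c c' : ℕ → Cl I}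
    (hc : ∀ n, Move (c n) (c (n + 1))) {t : ℕ} (ht : IsMaxCl (c t))
    (h : ∀ n ≤ t + 1, ppSeq c n ∣ ppSeq c' n) : c' 0 = c 0 := by
  have h₁ : (c 0).heap ∣ (c' 0).heap := by simpa [ppSeq_succ] using h 1 (by omega)
  refine Subtype.ext (Finset.ext fun b => ⟨fun hb => ?_, fun hb => ?_⟩)
  · obtain ⟨z, hz⟩ := h (t + 1) le_rfl
    have hb' : piece I b ∣ ppSeq c (t + 1) * z := by
      rw [← hz, ppSeq_succ']
      exact (piece_dvd_heap hb).mul_right _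
    rcases piece_dvd_mul hsymm hb' with hdvd | ⟨hindep, -⟩
    · exact mem_head_of_piece_dvd_ppSeq hsymm hc hdvd
    · have hlast : ∀ a ∈ (c t).1, I a b := fun a ha => hindep a (by
        rw [ppSeq_succ, occ_mul]
        exact Nat.lt_add_left _ (mem_iff_occ_heap_pos.mp ha))
      exact absurd (hlast b (ht.mem_of_forall_indep hsymm hlast)) (hirr b)
  · exact subset_of_heap_dvd_heap h₁ hb

lemma eq_of_dvd_ppSeq (hirr : ∀ a : S, ¬ I a a) {c c' : ℕ → Cl I}
    (hc : ∀ n, Move (c n) (c (n + 1))) {k : ℕ} (hk : IsMaxCl (c k))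
    (h : ∀ n ≤ k + 1, ppSeq c n ∣ ppSeq c' n) : ∀ i ≤ k, c' i = c i := by
  induction k generalizing c c' with
  | zero =>
    intro i hi
    obtain rfl : i = 0 := by omega
    exact head_eq_of_dvd_ppSeq hsymm hirr hc hk h
  | succ k ih =>
    intro i hi
    have h₀ := head_eq_of_dvd_ppSeq hsymm hirr hc hk h
    rcases i with _ | i
    · exact h₀
    refine ih (c' := fun j => c' (j + 1)) (fun n => hc (n + 1)) hk (fun n hn => ?_) i (by omega)
    have := h (n + 1) (by omega)
    rwa [ppSeq_succ', ppSeq_succ', h₀, (IsLeftCancelMul.mul_left_cancel _).dvd_cancel_left] at this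

end Admissible

section Vmax

variable {I : S → S → Prop}

lemma pp_inr (ξ : Bnd I) (n : ℕ) : pp (.inr ξ) n = ppSeq ξ.1 n := rfl

lemma Vmax_eq_of_isMaxCl {ξ : Bnd I} {k : ℕ} (hk : IsMaxCl (ξ.1 k))
    (hmin : ∀ j < k, ¬ IsMaxCl (ξ.1 j)) : Vmax ξ = .inl (ppSeq ξ.1 (k + 1)) := by
  classical
  have h : ∃ j, IsMaxCl (ξ.1 j) := ⟨k, hk⟩
  unfold Vmax
  erw [dif_pos h, (Nat.find_eq_iff h).mpr ⟨hk, hmin⟩]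

lemma Vmax_of_forall_not_isMaxCl {ξ : Bnd I} (h : ∀ k, ¬ IsMaxCl (ξ.1 k)) : Vmax ξ = .inr ξ := by
  unfold Vmax
  erw [dif_neg (not_exists.mpr h)]

lemma exists_of_Vmax_eq_inl {ξ : Bnd I} {x : Heap I} (h : Vmax ξ = .inl x) :
    ∃ k, IsMaxCl (ξ.1 k) ∧ (∀ j < k, ¬ IsMaxCl (ξ.1 j)) ∧ x = ppSeq ξ.1 (k + 1) := by
  by_cases hex : ∃ j, IsMaxCl (ξ.1 j)
  · classical
    refine ⟨Nat.find hex, Nat.find_spec hex, fun j => Nat.find_min hex, ?_⟩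
    rw [Vmax_eq_of_isMaxCl (Nat.find_spec hex) fun j => Nat.find_min hex] at h
    exact (Sum.inl.inj h).symm
  · rw [Vmax_of_forall_not_isMaxCl (not_exists.mp hex)] at h
    exact (Sum.inr_ne_inl h).elim

lemma Vmax_le (hCF : ∀ x : Heap I, ∃! c : ℕ → Cl I, CFprop I c x) (ξ : Bnd I) :
    mLe (Vmax ξ) (.inr ξ) := by
  by_cases hex : ∃ j, IsMaxCl (ξ.1 j)
  · classical
    rw [Vmax_eq_of_isMaxCl (Nat.find_spec hex) fun j => Nat.find_min hex]
    intro n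
    rw [hLe_iff_dvd, pp_inl_ppSeq hCF ξ.2.2]
    exact ppSeq_dvd_ppSeq _ (min_le_left _ _)
  · rw [Vmax_of_forall_not_isMaxCl (not_exists.mp hex)]
    exact fun n => dvd_rfl

end Vmax

theorem Vmax_isAST_general
    {S : Type} (I : S → S → Prop)
    (hsymm : ∀ a b : S, I a b → I b a)
    (hirr : ∀ a : S, ¬ I a a)
    (hCF : ∀ x : Heap I, ∃! c : ℕ → Cl I, CFprop I c x)
 :
    IsAST (fun ξ : Bnd I => Vmax ξ) := by
  classical
  refine ⟨Vmax_le hCF, fun ξ ξ' x hV hle => ?_⟩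
  obtain ⟨k, hk, hmin, rfl⟩ := exists_of_Vmax_eq_inl hV
  have hdvd : ∀ n ≤ k + 1, ppSeq ξ.1 n ∣ ppSeq ξ'.1 n := fun n hn => by
    simpa [hLe_iff_dvd, pp_inl_ppSeq hCF ξ.2.2, pp_inr, Nat.min_eq_left hn] using hle n
  have hagree := eq_of_dvd_ppSeq hsymm hirr ξ.2.2 hk hdvd
  change Vmax ξ = _ at hV
  change Vmax ξ' = Vmax ξ
  rw [hV, Vmax_eq_of_isMaxCl (by rwa [hagree k le_rfl])
    fun j hj => by rw [hagree j hj.le]; exact hmin j hj]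
  exact congrArg Sum.inl (ppSeq_congr fun j hj => hagree j (by omega))

theorem Vmax_isAST
    {S : Type} [Fintype S] [DecidableEq S] (I : S → S → Prop)
    (hsymm : ∀ a b : S, I a b → I b a)
    (hirr : ∀ a : S, ¬ I a a)
    (hconn : ∀ a b : S, Relation.ReflTransGen (fun x y : S => x ≠ y ∧ ¬ I x y) a b)
    (hcard : 1 < Fintype.card S)
    (hCF : ∀ x : Heap I, ∃! c : ℕ → Cl I, CFprop I c x)
 :
    IsAST (fun ξ : Bnd I => Vmax ξ) :=
  Vmax_isAST_general I hsymm hirr hCF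

end HeapPaper
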